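/- arXiv:1108.5248 — 4 statements merged into one kernel-verified Lean document; each statement's English description precedes it below -/
import Mathlib

section
/- For a weighted graph game on a tree (or forest), there exists a partition of the vertices into at most two sets such that every edge with positive weight has both endpoints in the same set and every edge with negative weight has its endpoints in different sets. Consequently the optimal coalition structure value equals the sum of all positive edge weights. -/
/-!
Label every vertex by the parity of the number of negative edges on the path to it from a fixed
root of its component. In a forest that path is unique, so for an edge `uv` one of the two paths
extends the other by `uv`, and the labels differ exactly across negative edges. Such a labelling
collects the weight of every positive edge and of no negative one, so its value is the total
positive weight, which bounds the value of every coalition structure termwise.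
-/

open scoped Classical
open Finset

/-- Value of a coalition structure (labelling `p`) in a weighted graph game. -/
noncomputable def gval {V : Type} [Fintype V] {α : Type} (G : SimpleGraph V)
    (w : Sym2 V → ℚ) (p : V → α) : ℚ :=
  ∑ e : Sym2 V, if e ∈ G.edgeSet ∧ (Sym2.map p e).IsDiag then w e else 0

/-- Sum of the weights of all positively-weighted edges of `G`. -/
noncomputable def posSum {V : Type} [Fintype V] (G : SimpleGraph V)
    (w : Sym2 V → ℚ) : ℚ :=
  ∑ e : Sym2 V, if e ∈ G.edgeSet ∧ 0 < w e then w e else 0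

namespace SimpleGraph

variable {V : Type*} {G : SimpleGraph V}

def Walk.parity (c : Sym2 V → Bool) {u v : V} (p : G.Walk u v) : Bool :=
  (p.edges.countP c).bodd

lemma Walk.parity_concat (c : Sym2 V → Bool) {u v w : V} (p : G.Walk u v) (h : G.Adj v w) :
    (p.concat h).parity c = xor (p.parity c) (c s(v, w)) := by
  cases hc : c s(v, w) <;> simp [parity, List.countP_append, hc]

lemma IsAcyclic.parity_ne_iff_of_adj (hG : G.IsAcyclic) (c : Sym2 V → Bool) {u v w : V}
    {p : G.Walk u v} {q : G.Walk u w} (hp : p.IsPath) (hq : q.IsPath) (hadj : G.Adj v w) :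
    p.parity c ≠ q.parity c ↔ c s(v, w) := by
  by_cases hv : v ∈ q.support
  · rw [hG.path_concat hp hq hadj hv, Walk.parity_concat]
    cases p.parity c <;> simp
  · have hw := hG.mem_support_of_ne_mem_support_of_adj_of_isPath hp hq hadj hv
    rw [hG.path_concat hq hp hadj.symm hw, Walk.parity_concat, Sym2.eq_swap]
    cases q.parity c <;> simp

/-- The root of `v` is the chosen representative of its component; in a forest the path chosen
from it is the only one (`IsAcyclic.parityLabel_eq`). -/
noncomputable def parityLabel (G : SimpleGraph V) (c : Sym2 V → Bool) (v : V) : Bool :=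
  (ConnectedComponent.exact (G.connectedComponentMk v).out_eq).exists_isPath.choose.parity c

lemma IsAcyclic.parityLabel_eq (hG : G.IsAcyclic) (c : Sym2 V → Bool) {u v : V}
    (hu : (G.connectedComponentMk v).out = u) {p : G.Walk u v} (hp : p.IsPath) :
    G.parityLabel c v = p.parity c := by
  subst hu
  have hr := ConnectedComponent.exact (G.connectedComponentMk v).out_eq
  rw [parityLabel, Subtype.mk.inj <| (hG.subsingleton_path _ v).elim
    ⟨_, hr.exists_isPath.choose_spec⟩ ⟨p, hp⟩]

lemma IsAcyclic.parityLabel_ne_iff (hG : G.IsAcyclic) (c : Sym2 V → Bool) {v w : V}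
    (hadj : G.Adj v w) : G.parityLabel c v ≠ G.parityLabel c w ↔ c s(v, w) := by
  have hr := ConnectedComponent.exact (G.connectedComponentMk v).out_eq
  obtain ⟨p, hp⟩ := hr.exists_isPath
  obtain ⟨q, hq⟩ := (hr.trans hadj.reachable).exists_isPath
  have hroot : (G.connectedComponentMk w).out = (G.connectedComponentMk v).out := by
    rw [ConnectedComponent.sound hadj.reachable]
  rw [hG.parityLabel_eq c rfl hp, hG.parityLabel_eq c hroot hq]
  exact hG.parity_ne_iff_of_adj c hp hq hadj

end SimpleGraph

section GraphGame

variable {V : Type} [Fintype V] (G : SimpleGraph V) (w : Sym2 V → ℚ)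

lemma gval_le_posSum {α : Type} (q : V → α) : gval G w q ≤ posSum G w := by
  refine Finset.sum_le_sum fun e _ => ?_
  by_cases he : e ∈ G.edgeSet <;> by_cases hw : 0 < w e <;> by_cases hq : (Sym2.map q e).IsDiag <;>
    simp [he, hw, hq, le_of_lt, not_lt.mp]

lemma gval_eq_posSum {α : Type} {p : V → α}
    (hpos : ∀ u v : V, G.Adj u v → 0 < w s(u, v) → p u = p v)
    (hneg : ∀ u v : V, G.Adj u v → w s(u, v) < 0 → p u ≠ p v) :
    gval G w p = posSum G w := by
  refine Finset.sum_congr rfl fun e _ => ?_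
  induction e with
  | _ u v =>
    by_cases huv : G.Adj u v
    · rcases lt_trichotomy (w s(u, v)) 0 with hw | hw | hw
      · simp [huv, hw.not_gt, hneg u v huv hw]
      · simp [hw]
      · simp [huv, hw, hpos u v huv hw]
    · simp [huv]

end GraphGame

/-- On a forest, there is a partition of the vertices into at most two sets
(given by a `Bool`-labelling) putting every positive edge inside a part and
every negative edge across parts; its value equals the total positive weight,
which is therefore the optimal coalition structure value. -/
theorem forest_optimal_structure {V : Type} [Fintype V]
    (G : SimpleGraph V) (hG : G.IsAcyclic) (w : Sym2 V → ℚ) :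
    ∃ p : V → Bool,
      (∀ u v : V, G.Adj u v → 0 < w s(u, v) → p u = p v) ∧
      (∀ u v : V, G.Adj u v → w s(u, v) < 0 → p u ≠ p v) ∧
      gval G w p = posSum G w ∧
      ∀ (α : Type) (q : V → α), gval G w q ≤ gval G w p := by
  set p := G.parityLabel fun e => decide (w e < 0)
  have hcut : ∀ u v, G.Adj u v → (p u ≠ p v ↔ w s(u, v) < 0) := fun u v huv => by
    simpa using hG.parityLabel_ne_iff (fun e => decide (w e < 0)) huv
  have hpos : ∀ u v : V, G.Adj u v → 0 < w s(u, v) → p u = p v := fun u v huv hw =>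
    not_not.mp fun hne => hw.not_gt ((hcut u v huv).mp hne)
  have hneg : ∀ u v : V, G.Adj u v → w s(u, v) < 0 → p u ≠ p v := fun u v huv =>
    (hcut u v huv).mpr
  have hval := gval_eq_posSum G w hpos hneg
  exact ⟨p, hpos, hneg, hval, fun α q => hval ▸ gval_le_posSum G w q⟩
end

section
/- Let G be a simple graph admitting a proper vertex coloring with k colors, and let the positive edges of G form a vertex-disjoint union of stars. Then the positive edges can be covered by at most k−1 feasible sets: there exist k−1 partitions of the vertices, each avoiding all negative edges inside parts, such that every positive star edge lies inside a part of at least one partition. -/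
open scoped Classical
open Finset

/-- If `G` is properly `k`-colorable and its positive edges form a
vertex-disjoint union of stars (with set of centers `C`: every positive edge
has exactly one endpoint in `C`, and every non-center vertex is incident to at
most one positive edge), then the positive edges can be covered by `k - 1`
feasible sets: there are `k - 1` vertex partitions, each putting every
negative edge across parts, such that each positive edge lies inside a part
of at least one of them. -/
theorem stars_covered_by_feasible_sets {V : Type} [Fintype V]
    (G : SimpleGraph V) (w : Sym2 V → ℚ) (k : ℕ)
    (hcol : G.Colorable k)
    (C : Finset V)
    (hstar : ∀ u v : V, G.Adj u v → 0 < w s(u, v) → (u ∈ C ↔ v ∉ C))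
    (hleaf : ∀ v : V, v ∉ C → ∀ x y : V, G.Adj v x → G.Adj v y →
      0 < w s(v, x) → 0 < w s(v, y) → x = y) :
    ∃ p : Fin (k - 1) → V → ℕ,
      (∀ i : Fin (k - 1), ∀ u v : V, G.Adj u v → w s(u, v) < 0 → p i u ≠ p i v) ∧
      (∀ u v : V, G.Adj u v → 0 < w s(u, v) → ∃ i : Fin (k - 1), p i u = p i v) := by
  classical
  obtain ⟨c⟩ := hcol
  rcases Nat.lt_or_ge k 2 with hk | hk
  · -- k ≤ 1 : there are no edges at all
    have hne : ∀ u v : V, ¬ G.Adj u v := by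
      intro u v h
      have hval := c.valid h
      interval_cases k
      · exact (Nat.not_lt_zero _ (c u).2)
      · exact hval (Subsingleton.elim _ _)
    exact ⟨fun _ _ => 0, fun i u v h _ => absurd h (hne u v),
      fun u v h _ => absurd h (hne u v)⟩
  haveI : NeZero k := ⟨by omega⟩
  set e := Fintype.equivFin V with he
  -- injectivity of the cast Fin k → ZMod k
  have hinj : ∀ a b : Fin k, (((a : ℕ) : ZMod k) = ((b : ℕ) : ZMod k)) → a = b := by
    intro a b h
    have ha := ZMod.val_cast_of_lt (n := k) a.2
    have hb := ZMod.val_cast_of_lt (n := k) b.2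
    have : ((a : ℕ) : ZMod k).val = ((b : ℕ) : ZMod k).val := by rw [h]
    rw [ha, hb] at this
    exact Fin.ext this
  -- the partitions
  set p : Fin (k - 1) → V → ℕ := fun i v =>
    if v ∈ C then k + e v
    else if h : ∃ u, G.Adj v u ∧ 0 < w s(v, u) ∧
        (((c u : ℕ) : ZMod k) = ((c v : ℕ) : ZMod k) + ((i : ℕ) + 1 : ℕ)) then
      k + e h.choose
    else (c v : ℕ)
  refine ⟨p, ?_, ?_⟩
  · -- negative edges cross parts
    intro i u v hadj hneg heq
    by_cases hu : u ∈ C <;> by_cases hv : v ∈ C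
    · simp only [p, if_pos hu, if_pos hv, add_right_inj] at heq
      exact G.ne_of_adj hadj (e.injective (Fin.ext heq))
    · simp only [p, if_pos hu, if_neg hv] at heq
      split_ifs at heq with h
      · -- u equals v's chosen positive neighbor : contradiction with negativity
        obtain ⟨hadj', hpos, _⟩ := h.choose_spec
        have : u = h.choose := e.injective (Fin.ext (by omega))
        rw [← this] at hpos
        rw [Sym2.eq_swap] at hpos
        exact absurd hpos (not_lt.mpr hneg.le)
      · have : (c v : ℕ) < k := (c v).2
        omega
    · simp only [p, if_neg hu, if_pos hv] at heq
      split_ifs at heq with h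
      · obtain ⟨hadj', hpos, _⟩ := h.choose_spec
        have : v = h.choose := e.injective (Fin.ext (by omega))
        rw [← this] at hpos
        exact absurd hpos (not_lt.mpr hneg.le)
      · have : (c u : ℕ) < k := (c u).2
        omega
    · simp only [p, if_neg hu, if_neg hv] at heq
      split_ifs at heq with h1 h2 h2
      · obtain ⟨_, _, hc1⟩ := h1.choose_spec
        obtain ⟨_, _, hc2⟩ := h2.choose_spec
        have hx : h1.choose = h2.choose := e.injective (Fin.ext (by omega))
        rw [hx, hc2] at hc1
        have : ((c u : ℕ) : ZMod k) = ((c v : ℕ) : ZMod k) := by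
          exact (add_right_cancel hc1).symm
        exact c.valid hadj (hinj _ _ this)
      · have : (c v : ℕ) < k := (c v).2
        omega
      · have : (c u : ℕ) < k := (c u).2
        omega
      · exact c.valid hadj (hinj _ _ (by exact_mod_cast congrArg (Nat.cast : ℕ → ZMod k) heq))
  · -- positive edges lie inside a part of some partition
    -- helper : the case center u, leaf v
    have key : ∀ u v : V, G.Adj u v → 0 < w s(u, v) → u ∈ C → v ∉ C →
        ∃ i : Fin (k - 1), p i u = p i v := by
      intro u v hadj hpos hu hv
      have hcne : c u ≠ c v := c.valid hadj
      set t : ℕ := (((c u : ℕ) : ZMod k) - ((c v : ℕ) : ZMod k)).val with ht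
      have htne : t ≠ 0 := by
        intro h0
        apply hcne
        apply hinj
        have : ((c u : ℕ) : ZMod k) - ((c v : ℕ) : ZMod k) = 0 :=
          (ZMod.val_eq_zero _).mp h0
        linear_combination this
      have htlt : t < k := ZMod.val_lt _
      refine ⟨⟨t - 1, by omega⟩, ?_⟩
      have hcu : ((c u : ℕ) : ZMod k) = ((c v : ℕ) : ZMod k) + (t : ℕ) := by
        rw [ht, ZMod.natCast_val, ZMod.cast_id]
        ring
      have hex : ∃ x, G.Adj v x ∧ 0 < w s(v, x) ∧
          (((c x : ℕ) : ZMod k) = ((c v : ℕ) : ZMod k) +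
            (((⟨t - 1, by omega⟩ : Fin (k-1)) : ℕ) + 1 : ℕ)) := by
        refine ⟨u, hadj.symm, by rwa [Sym2.eq_swap] at hpos, ?_⟩
        have : ((⟨t - 1, by omega⟩ : Fin (k-1)) : ℕ) + 1 = t := by
          simp; omega
        rw [this]
        exact hcu
      obtain ⟨hadj', hpos', _⟩ := hex.choose_spec
      have hxu : hex.choose = u :=
        hleaf v hv _ u hadj' hadj.symm hpos' (by rwa [Sym2.eq_swap] at hpos)
      simp only [p, if_pos hu, if_neg hv, dif_pos hex, hxu]
    intro u v hadj hpos
    by_cases hu : u ∈ C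
    · exact key u v hadj hpos hu ((hstar u v hadj hpos).mp hu)
    · have hv : v ∈ C := by
        by_contra hv
        exact hu ((hstar u v hadj hpos).mpr hv)
      obtain ⟨i, hi⟩ := key v u hadj.symm (by rwa [Sym2.eq_swap] at hpos) hv
        (fun h => (hstar u v hadj hpos).mp h hv)
      exact ⟨i, hi.symm⟩
end

section
/- Consider the graph G' obtained from a simple graph G = (V, E) by adding a new vertex s joined to every vertex of V by an edge of weight +1, while each original edge of G gets weight −1. If the optimal coalition structure of the weighted graph game on G' has value k', then G contains an independent set of size at least k'/9. -/
open scoped Classical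
open Finset

/-- The graph `G'` obtained from `G` by adding a new vertex `none` joined to
every original vertex. -/
def addApex {V : Type} (G : SimpleGraph V) : SimpleGraph (Option V) where
  Adj a b := (a = none ∧ b ≠ none) ∨ (b = none ∧ a ≠ none) ∨
    (∃ u v : V, a = some u ∧ b = some v ∧ G.Adj u v)
  symm := by
    constructor
    rintro a b (⟨h1, h2⟩ | ⟨h1, h2⟩ | ⟨u, v, h1, h2, h3⟩)
    · exact Or.inr (Or.inl ⟨h1, h2⟩)
    · exact Or.inl ⟨h1, h2⟩
    · exact Or.inr (Or.inr ⟨v, u, h2, h1, h3.symm⟩)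
  loopless := by
    constructor
    rintro a (⟨h1, h2⟩ | ⟨h1, h2⟩ | ⟨u, v, h1, h2, h3⟩)
    · exact h2 h1
    · exact h2 h1
    · rw [h1] at h2
      obtain rfl : u = v := by simpa using h2
      exact G.loopless.irrefl u h3

/-- Weights for the reduction: edges incident to the apex `none` have weight
`+1`, all original edges have weight `-1`. -/
noncomputable def apexWeightOne (V : Type) : Sym2 (Option V) → ℚ :=
  fun e => if (none : Option V) ∈ e then 1 else -1

/-!
Let `A` be the set of original vertices in the part of the apex and `D` the set of edges of `G`
inside parts. The apex edges inside that part contribute `|A|` and the edges of `D` contribute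
`-|D|`, so the value is `|A| - |D|`. Since `D` contains every edge inside `A`, and deleting one
endpoint of each such edge leaves an independent subset of `A`, the value is at most the size of
an independent set.
-/

theorem Sym2.sum_option {α M : Type*} [Fintype α] [AddCommMonoid M] (f : Sym2 (Option α) → M) :
    ∑ e, f e = ∑ o, f s(none, o) + ∑ e : Sym2 α, f (e.map some) := by
  have h_none : ({e | none ∈ e} : Finset (Sym2 (Option α))) = univ.image (s(none, ·)) := by
    ext e
    simp [Sym2.mem_iff_exists, eq_comm]
  have h_some : ({e | none ∉ e} : Finset (Sym2 (Option α))) = univ.image (Sym2.map some) := by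
    ext e
    induction e using Sym2.ind with
    | h a b => cases a <;> cases b <;> simp [Sym2.exists, exists_or]
  rw [← sum_filter_add_sum_filter_not univ (none ∈ ·), h_none, h_some,
    sum_image fun _ _ _ _ => Sym2.congr_right.1,
    sum_image (by simpa using Sym2.map.injective (Option.some_injective α))]

namespace SimpleGraph

variable {V : Type*} [Fintype V] (G : SimpleGraph V)

theorem exists_isIndepSet_subset_card_le_add_card_edges (A : Finset V) :
    ∃ t ⊆ A, G.IsIndepSet (t : Set V) ∧ #A ≤ #t + #(G.edgeFinset ∩ A.sym2) := by
  induction A using Finset.strongInduction with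
  | H A ih =>
    by_cases hA : G.IsIndepSet (A : Set V)
    · exact ⟨A, subset_rfl, hA, Nat.le_add_right _ _⟩
    obtain ⟨u, hu, v, hv, -, huv⟩ : ∃ u ∈ A, ∃ v ∈ A, u ≠ v ∧ G.Adj u v := by
      simpa [IsIndepSet, Set.Pairwise] using hA
    obtain ⟨t, htA, ht, hcard⟩ := ih (A.erase u) (erase_ssubset hu)
    have hedges : G.edgeFinset ∩ (A.erase u).sym2 ⊂ G.edgeFinset ∩ A.sym2 :=
      (ssubset_iff_of_subset (inter_subset_inter_left (sym2_mono (erase_subset u A)))).2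
        ⟨s(u, v), by simp [huv, hu, hv], by simp⟩
    have hedges_card := card_lt_card hedges
    have hA_card := card_erase_add_one hu
    exact ⟨t, htA.trans (erase_subset u A), ht, by omega⟩

theorem card_edgeFinset_inter_sym2_le {α : Type*} [DecidableEq α] (q : V → α) (c : α) :
    #(G.edgeFinset ∩ ({v | q v = c} : Finset V).sym2) ≤
      #{e ∈ G.edgeFinset | (e.map q).IsDiag} := by
  refine card_le_card fun e he => ?_
  induction e using Sym2.ind with
  | h u v => simp_all

end SimpleGraph

section addApex

variable {V : Type} (G : SimpleGraph V)

@[simp]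
theorem addApex_adj_none_some (v : V) : (addApex G).Adj none (some v) := by
  simp [addApex]

@[simp]
theorem addApex_adj_some_some (u v : V) : (addApex G).Adj (some u) (some v) ↔ G.Adj u v := by
  simp [addApex]

@[simp]
theorem map_some_mem_edgeSet_addApex (e : Sym2 V) :
    e.map some ∈ (addApex G).edgeSet ↔ e ∈ G.edgeSet := by
  induction e using Sym2.ind with
  | h u v => simp

theorem gval_addApex_apexWeightOne [Fintype V] {α : Type} [DecidableEq α] (p : Option V → α) :
    gval (addApex G) (apexWeightOne V) p =
      #{v | p (some v) = p none} - #{e ∈ G.edgeFinset | (e.map (p ∘ some)).IsDiag} := by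
  rw [gval, Sym2.sum_option, Fintype.sum_option]
  simp [apexWeightOne, Sym2.mem_map, ← sum_filter, eq_comm, Sym2.map_map, sub_eq_add_neg,
    ← filter_filter, Set.filter_mem_univ_eq_toFinset, SimpleGraph.edgeFinset]

end addApex

/-- If the optimal coalition structure of the weighted graph game on `G'`
(apex weights `±1`) has value `k'`, then `G` contains an independent set of
size at least `k'/9`. -/
theorem indep_from_optimal_structure {V : Type} [Fintype V]
    (G : SimpleGraph V) (k' : ℚ)
    (hopt : ∃ p : Option V → ℕ, gval (addApex G) (apexWeightOne V) p = k' ∧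
      ∀ q : Option V → ℕ, gval (addApex G) (apexWeightOne V) q ≤ k') :
    ∃ t : Finset V, (∀ u ∈ t, ∀ v ∈ t, ¬ G.Adj u v) ∧ k' ≤ 9 * t.card := by
  obtain ⟨p, rfl, -⟩ := hopt
  obtain ⟨t, -, ht, hcard⟩ :=
    G.exists_isIndepSet_subset_card_le_add_card_edges {v | p (some v) = p none}
  have hcard' :
      #{v | p (some v) = p none} ≤ #t + #{e ∈ G.edgeFinset | (e.map (p ∘ some)).IsDiag} :=
    hcard.trans (Nat.add_le_add_left (G.card_edgeFinset_inter_sym2_le (p ∘ some) (p none)) _)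
  refine ⟨t, fun u hu v hv huv => ht hu hv (G.ne_of_adj huv) huv, ?_⟩
  calc gval (addApex G) (apexWeightOne V) p
      = #{v | p (some v) = p none} - #{e ∈ G.edgeFinset | (e.map (p ∘ some)).IsDiag} :=
        gval_addApex_apexWeightOne G p
    _ ≤ #t := by
        rw [sub_le_iff_le_add]
        exact_mod_cast hcard'
    _ ≤ 9 * #t := le_mul_of_one_le_left (by positivity) (by norm_num)
end

section
/- Let G be a simple graph such that every subgraph with m vertices has at most c·m edges (c ≥ 1). Then the positive edges of any weighting of G can be covered by O(c²) feasible sets; concretely, E⁺ partitions into at most 2c forests, each forest splits into 2 vertex-disjoint unions of stars, and each union of stars splits into at most 2c feasible sets using a (2c+1)-coloring of G, giving at most 8c² feasible sets in total. -/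
/-
Since every vertex set `S` contains a vertex with at most `2c` neighbours in `S`, the vertices can
be ranked so that each has at most `2c` neighbours of smaller rank; greedy colouring along the
ranking uses `2c + 1` colours. Orienting every positive edge towards its end of smaller rank gives
out-degrees at most `2c`, so the positive edges are covered by `2c` forests, each given by a parent
map. The parity of the depth splits a forest into two unions of stars. In a union of stars, a
centre together with its leaves of one colour is a part of a feasible partition: the leaves are
pairwise non-adjacent, and a leaf meets its centre along a positive edge of the simple graph.
The leaf colours differ from the colour of the centre, so `2c` indices suffice per union of stars,
and there are `2c · 2 · 2c = 8c²` partitions in all.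
-/

open scoped Classical
open Finset

/-- Number of edges of `G` with both endpoints in `S`. -/
noncomputable def edgesIn {V : Type} [Fintype V] (G : SimpleGraph V)
    (S : Finset V) : ℕ :=
  (Finset.univ.filter (fun e : Sym2 V => e ∈ G.edgeSet ∧ ∀ v ∈ e, v ∈ S)).card

theorem exists_functions_cover_of_card_le {α β : Type*} {k : ℕ} (R : α → Finset β) (d : α → β)
    (hR : ∀ a, #(R a) ≤ k) :
    ∃ f : Fin k → α → β, (∀ j a, f j a = d a ∨ f j a ∈ R a) ∧ ∀ a, ∀ b ∈ R a, ∃ j, f j a = b := by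
  refine ⟨fun j a => if h : (j : ℕ) < #(R a) then (R a).equivFin.symm ⟨j, h⟩ else d a,
    fun j a => ?_, fun a b hb => ⟨Fin.castLE (hR a) ((R a).equivFin ⟨b, hb⟩), ?_⟩⟩
  · dsimp only
    split_ifs
    exacts [Or.inr (coe_mem _), Or.inl rfl]
  · simp

section Forest

variable {α : Type*}

/-- Depth in the forest whose roots are the fixed points of `f` and where `f` sends every other
vertex to its parent. -/
noncomputable def forestDepth (f : α → α) (r : α → ℕ) (hf : ∀ a, f a ≠ a → r (f a) < r a)
    (a : α) : ℕ :=
  if h : f a = a then 0 else forestDepth f r hf (f a) + 1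
termination_by r a
decreasing_by exact hf a h

variable {f : α → α} {r : α → ℕ}

theorem forestDepth_of_ne (hf : ∀ a, f a ≠ a → r (f a) < r a) {a : α} (h : f a ≠ a) :
    forestDepth f r hf a = forestDepth f r hf (f a) + 1 := by
  rw [forestDepth, dif_neg h]

/-- An idempotent map encodes a union of vertex-disjoint stars: the centres are its fixed points and
every other point is a leaf attached to its image. -/
theorem exists_star_split (hf : ∀ a, f a ≠ a → r (f a) < r a) :
    ∃ s : Bool → α → α, (∀ b a, s b (s b a) = s b a) ∧ (∀ b a, s b a = a ∨ s b a = f a) ∧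
      ∀ a, ∃ b, s b a = f a := by
  refine ⟨fun b a => if (forestDepth f r hf a).bodd = b then f a else a, fun b a => ?_,
    fun b a => ?_, fun a => ⟨_, if_pos rfl⟩⟩
  · by_cases ha : (forestDepth f r hf a).bodd = b
    · simp only [if_pos ha]
      by_cases hfa : f a = a
      · simp [hfa, ha]
      · rw [forestDepth_of_ne hf hfa, Nat.bodd_succ] at ha
        simp [← ha]
    · simp [ha]
  · dsimp only
    split_ifs
    exacts [Or.inr rfl, Or.inl rfl]

end Forest

namespace SimpleGraph

section Degenerate

variable {V : Type*} [Fintype V] (G : SimpleGraph V) {k : ℕ}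

theorem exists_rank_of_degenerate
    (h : ∀ S : Finset V, S.Nonempty → ∃ v ∈ S, #(G.neighborFinset v ∩ S) ≤ k) :
    ∃ r : V → ℕ, Function.Injective r ∧ ∀ v, #{u ∈ G.neighborFinset v | r u < r v} ≤ k := by
  suffices ∀ S : Finset V, ∃ r : V → ℕ, Set.InjOn r S ∧
      ∀ v ∈ S, #{u ∈ G.neighborFinset v ∩ S | r u < r v} ≤ k by
    obtain ⟨r, hinj, hr⟩ := this univ
    exact ⟨r, by simpa using hinj, fun v => by simpa using hr v (mem_univ v)⟩
  intro S
  induction S using Finset.strongInduction with | H S ih =>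
  rcases S.eq_empty_or_nonempty with rfl | hS
  · exact ⟨0, by simp, by simp⟩
  obtain ⟨v, hvS, hv⟩ := h S hS
  obtain ⟨r, hinj, hr⟩ := ih (S.erase v) (erase_ssubset hvS)
  -- `v` has at most `k` neighbours in `S`, so it can be ranked last.
  set r' := Function.update r v ((S.erase v).sup r + 1) with hr'
  have hr'v : ∀ u ∈ S, u ≠ v → r' u = r u ∧ r' u < r' v := fun u hu huv => by
    refine ⟨Function.update_of_ne huv _ _, ?_⟩
    rw [hr', Function.update_of_ne huv, Function.update_self]
    exact Nat.lt_succ_of_le (le_sup (mem_erase.mpr ⟨huv, hu⟩))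
  refine ⟨r', fun a ha b hb hab => ?_, fun u hu => ?_⟩
  · by_contra hne
    by_cases hav : a = v
    · subst hav
      exact (hr'v b hb (Ne.symm hne)).2.ne' hab
    by_cases hbv : b = v
    · subst hbv
      exact (hr'v a ha hav).2.ne hab
    rw [(hr'v a ha hav).1, (hr'v b hb hbv).1] at hab
    exact hne (hinj (mem_erase.mpr ⟨hav, ha⟩) (mem_erase.mpr ⟨hbv, hb⟩) hab)
  by_cases huv : u = v
  · subst huv
    exact (card_filter_le _ _).trans hv
  refine (card_le_card fun x hx => ?_).trans (hr u (mem_erase.mpr ⟨huv, hu⟩))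
  simp only [mem_filter, mem_inter, mem_erase] at hx ⊢
  have hxv : x ≠ v := by
    rintro rfl
    exact (hr'v u hu huv).2.not_gt hx.2
  rw [← (hr'v x hx.1.2 hxv).1, ← (hr'v u hu huv).1]
  exact ⟨⟨hx.1.1, hxv, hx.1.2⟩, hx.2⟩

theorem colorable_of_rank (r : V → ℕ) (hr : Function.Injective r)
    (hdeg : ∀ v, #{u ∈ G.neighborFinset v | r u < r v} ≤ k) : G.Colorable (k + 1) := by
  suffices ∀ S : Finset V, ∃ φ : V → Fin (k + 1), ∀ u ∈ S, ∀ v ∈ S, G.Adj u v → φ u ≠ φ v by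
    obtain ⟨φ, hφ⟩ := this univ
    exact ⟨Coloring.mk φ fun h => hφ _ (mem_univ _) _ (mem_univ _) h⟩
  intro S
  induction S using Finset.induction_on_max_value r with
  | empty => exact ⟨0, by simp⟩
  | insert a S haS hmax ih =>
    obtain ⟨φ, hφ⟩ := ih
    have : #(({u ∈ G.neighborFinset a | r u < r a}).image φ) < #(univ : Finset (Fin (k + 1))) :=
      by simpa using (card_image_le.trans (hdeg a)).trans_lt k.lt_succ_self
    obtain ⟨col, -, hcol⟩ := exists_mem_notMem_of_card_lt_card this
    have hnew : ∀ u ∈ S, G.Adj a u → φ u ≠ col := fun u hu hadj he => by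
      have hua : u ≠ a := ne_of_mem_of_not_mem hu haS
      refine hcol (mem_image.mpr ⟨u, mem_filter.mpr ⟨by simpa using hadj, ?_⟩, he⟩)
      exact (hmax u hu).lt_of_ne (hr.ne hua)
    refine ⟨Function.update φ a col, fun u hu v hv hadj => ?_⟩
    rcases mem_insert.mp hu with rfl | hu <;> rcases mem_insert.mp hv with hva | hv
    · exact (G.ne_of_adj hadj hva.symm).elim
    · rw [Function.update_self, Function.update_of_ne (ne_of_mem_of_not_mem hv haS)]
      exact (hnew v hv hadj).symm
    · rw [hva, Function.update_self, Function.update_of_ne (ne_of_mem_of_not_mem hu haS)]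
      exact hnew u hu (hva ▸ hadj.symm)
    · rw [Function.update_of_ne (ne_of_mem_of_not_mem hu haS),
        Function.update_of_ne (ne_of_mem_of_not_mem hv haS)]
      exact hφ u hu v hv hadj

end Degenerate

section Sparse

variable {V : Type} [Fintype V] (G : SimpleGraph V)

theorem sum_card_neighborFinset_inter (S : Finset V) :
    ∑ v ∈ S, #(G.neighborFinset v ∩ S) = 2 * edgesIn G S := by
  have hdeg (v : (S : Set V)) : (G.induce S).degree v = #(G.neighborFinset v ∩ S) := by
    rw [← card_neighborFinset_eq_degree]
    convert congrArg card (map_neighborFinset_induce (G := G) v) using 1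
    · rw [card_map]; congr!
    · rw [Finset.toFinset_coe]
  have hedges : #(G.induce S).edgeFinset = edgesIn G S := by
    convert congrArg card (map_edgeFinset_induce (G := G) (s := (S : Set V))) using 1
    · rw [card_map]; congr!
    · rw [edgesIn, Finset.toFinset_coe]
      congr 1
      ext e
      simp [mem_sym2_iff]
  rw [← hedges, ← sum_degrees_eq_twice_card_edges, ← Finset.sum_coe_sort S]
  exact Finset.sum_congr rfl fun v _ => (hdeg v).symm

theorem exists_card_neighborFinset_inter_le {c : ℕ}
    (hsparse : ∀ S : Finset V, edgesIn G S ≤ c * #S) {S : Finset V} (hS : S.Nonempty) :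
    ∃ v ∈ S, #(G.neighborFinset v ∩ S) ≤ 2 * c := by
  by_contra! h
  have := calc (2 * c + 1) * #S
      = ∑ _v ∈ S, (2 * c + 1) := by rw [sum_const, smul_eq_mul, mul_comm]
    _ ≤ ∑ v ∈ S, #(G.neighborFinset v ∩ S) := sum_le_sum h
    _ = 2 * edgesIn G S := G.sum_card_neighborFinset_inter S
    _ ≤ 2 * c * #S := by rw [mul_assoc]; exact Nat.mul_le_mul_left 2 (hsparse S)
  have := hS.card_pos
  nlinarith

end Sparse

variable {V α : Type*} (G : SimpleGraph V) (w : Sym2 V → ℚ) {k : ℕ}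

/-- The feasible set of the partition with part map `p` consists of the positive edges inside
its parts. -/
def IsFeasible (p : V → α) : Prop :=
  ∀ u v, G.Adj u v → w s(u, v) < 0 → p u ≠ p v

variable {G w}

theorem IsFeasible.comp {β : Type*} {p : V → α} (hp : G.IsFeasible w p) {g : α → β}
    (hg : Function.Injective g) : G.IsFeasible w (g ∘ p) :=
  fun u v huv hw => hg.ne (hp u v huv hw)

/-- The star with centre `s v` is cut into `k` pieces by the colours of its leaves; since leaves
avoid the colour of the centre, `succAbove` indexes those colours by `Fin k`. -/
def starPart (φ : V → Fin (k + 1)) (s : V → V) (t : Fin k) (v : V) : V :=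
  if φ v = (φ (s v)).succAbove t then s v else v

theorem isFeasible_starPart (φ : G.Coloring (Fin (k + 1))) {s : V → V}
    (hs : ∀ v, s v ≠ v → G.Adj v (s v) ∧ 0 < w s(v, s v)) (t : Fin k) :
    G.IsFeasible w (starPart φ s t) := by
  have hleaf : ∀ v, φ v = (φ (s v)).succAbove t → s v ≠ v := fun v hv hsv =>
    Fin.succAbove_ne _ t (hsv ▸ hv).symm
  intro u v huv hw hp
  unfold starPart at hp
  split_ifs at hp with hu hv hv
  · exact φ.valid huv (hu.trans (hp ▸ hv.symm))
  · exact (hs u (hleaf u hu)).2.not_gt (hp ▸ hw)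
  · exact (hs v (hleaf v hv)).2.not_gt (by rw [← hp, Sym2.eq_swap]; exact hw)
  · exact G.ne_of_adj huv hp

theorem exists_starPart_eq (φ : G.Coloring (Fin (k + 1))) {s : V → V} (hs : ∀ v, s (s v) = s v)
    {v : V} (hv : G.Adj v (s v)) : ∃ t, starPart φ s t v = starPart φ s t (s v) := by
  obtain ⟨t, ht⟩ := Fin.exists_succAbove_eq (φ.valid hv)
  refine ⟨t, ?_⟩
  simp [starPart, ht, hs]

theorem exists_feasible_cover_of_forest (φ : G.Coloring (Fin (k + 1))) {f : V → V} {r : V → ℕ}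
    (hf : ∀ v, f v ≠ v → G.Adj v (f v) ∧ 0 < w s(v, f v) ∧ r (f v) < r v) :
    ∃ p : Bool × Fin k → V → V, (∀ i, G.IsFeasible w (p i)) ∧
      ∀ v, f v ≠ v → ∃ i, p i v = p i (f v) := by
  obtain ⟨s, hs_idem, hs_f, hs_cover⟩ := exists_star_split fun v h => (hf v h).2.2
  have hs_edge : ∀ b v, s b v ≠ v → G.Adj v (s b v) ∧ 0 < w s(v, s b v) := fun b v h => by
    rcases hs_f b v with h' | h'
    · exact absurd h' h
    · rw [h'] at h ⊢
      exact ⟨(hf v h).1, (hf v h).2.1⟩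
  refine ⟨fun i => starPart φ (s i.1) i.2, fun i => isFeasible_starPart φ (hs_edge i.1) i.2,
    fun v hv => ?_⟩
  obtain ⟨b, hb⟩ := hs_cover v
  obtain ⟨t, ht⟩ := exists_starPart_eq φ (hs_idem b) (hb ▸ (hf v hv).1)
  exact ⟨(b, t), hb ▸ ht⟩

variable [Fintype V] (G w)

theorem exists_feasible_cover_of_rank (r : V → ℕ) (hr : Function.Injective r)
    (hdeg : ∀ v, #{u ∈ G.neighborFinset v | r u < r v} ≤ k) :
    ∃ p : Fin k × Bool × Fin k → V → V, (∀ i, G.IsFeasible w (p i)) ∧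
      ∀ u v, G.Adj u v → 0 < w s(u, v) → ∃ i, p i u = p i v := by
  obtain ⟨φ⟩ := G.colorable_of_rank r hr hdeg
  obtain ⟨f, hf_mem, hf_cover⟩ := exists_functions_cover_of_card_le
    (fun v => {u ∈ G.neighborFinset v | 0 < w s(v, u) ∧ r u < r v}) id
    fun v => (card_le_card fun u => by simp +contextual).trans (hdeg v)
  choose p hp_feas hp_cover using fun j => exists_feasible_cover_of_forest (w := w) φ (f := f j)
    (r := r) fun v hv => by simpa [hv] using hf_mem j v
  refine ⟨fun i => p i.1 i.2, fun i => hp_feas i.1 i.2, fun u v huv hw => ?_⟩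
  wlog hlt : r u < r v generalizing u v
  · obtain ⟨i, hi⟩ := this v u huv.symm (by rwa [Sym2.eq_swap])
      ((not_lt.mp hlt).lt_of_ne (hr.ne (G.ne_of_adj huv).symm))
    exact ⟨i, hi.symm⟩
  obtain ⟨j, hj⟩ := hf_cover v u (by simp [huv.symm, Sym2.eq_swap ▸ hw, hlt])
  obtain ⟨i, hi⟩ := hp_cover j v (by rw [hj]; exact G.ne_of_adj huv)
  exact ⟨(j, i), by rw [hj] at hi; exact hi.symm⟩

end SimpleGraph

theorem sparse_feasible_cover_general {V : Type} [Fintype V]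
    (G : SimpleGraph V) (w : Sym2 V → ℚ) (c : ℕ)
    (hsparse : ∀ S : Finset V, edgesIn G S ≤ c * S.card) :
    ∃ (m : ℕ), m ≤ 8 * c ^ 2 ∧ ∃ p : Fin m → V → ℕ,
      (∀ i, ∀ u v : V, G.Adj u v → w s(u, v) < 0 → p i u ≠ p i v) ∧
      (∀ u v : V, G.Adj u v → 0 < w s(u, v) → ∃ i, p i u = p i v) := by
  obtain ⟨r, hr, hdeg⟩ := G.exists_rank_of_degenerate fun S hS =>
    G.exists_card_neighborFinset_inter_le hsparse hS
  obtain ⟨p, hp_feas, hp_cover⟩ := G.exists_feasible_cover_of_rank w r hr hdeg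
  let e := Fintype.equivFin (Fin (2 * c) × Bool × Fin (2 * c))
  refine ⟨_, ?_, fun i => r ∘ p (e.symm i), fun i => (hp_feas _).comp hr, fun u v huv hw => ?_⟩
  · simp only [Fintype.card_prod, Fintype.card_fin, Fintype.card_bool]
    exact le_of_eq (by ring)
  · obtain ⟨i, hi⟩ := hp_cover u v huv hw
    exact ⟨e i, by simp [hi]⟩

/-- If every vertex subset `S` of `G` induces at most `c·|S|` edges (`c ≥ 1`),
then for any weighting the positive edges can be covered by at most `8c²`
feasible sets: there are at most `8c²` vertex partitions, each putting every
negative edge across parts, which together put every positive edge inside a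
part. -/
theorem sparse_feasible_cover {V : Type} [Fintype V]
    (G : SimpleGraph V) (w : Sym2 V → ℚ) (c : ℕ) (hc : 1 ≤ c)
    (hsparse : ∀ S : Finset V, edgesIn G S ≤ c * S.card) :
    ∃ (m : ℕ), m ≤ 8 * c ^ 2 ∧ ∃ p : Fin m → V → ℕ,
      (∀ i, ∀ u v : V, G.Adj u v → w s(u, v) < 0 → p i u ≠ p i v) ∧
      (∀ u v : V, G.Adj u v → 0 < w s(u, v) → ∃ i, p i u = p i v) :=
  sparse_feasible_cover_general G w c hsparse
end
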